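/- Let a > 0 and let g : ℝ → ℝ be non-decreasing. Let Ω = T × (0,∞) with T ⊂ ℝⁿ bounded open, and suppose w ∈ C²(Ω) ∩ C(closure(Ω)) is bounded, harmonic in Ω, satisfies w ≤ 0 on ∂T × [0,∞), and −∂_λ w + a w ≤ 0 on T × {0}. Then w ≤ 0 in Ω. -/

import Mathlib

/-!
Perturb `w` by the barrier `ε ψ(λ)` with `ψ(λ) = e^{-λ} - λ`. Since `Δψ = e^{-λ} > 0`, the function
`v = w + ε ψ` is strictly subharmonic and has no interior local maximum; since `w` is bounded and
`ψ → -∞`, `v` attains its maximum over `closure Ω`. On the lateral boundary `v ≤ ε`; on the bottom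
`∂_λ v ≤ 0` and `ψ'(0) = -2`, so the Robin condition gives `a w ≤ ∂_λ w ≤ 2ε`. Hence
`v ≤ ε (2/a + 1)` on `closure Ω`, so `w(x, λ) ≤ ε (2/a + 1 + λ)`, and `ε → 0`.
-/

/-- Second derivative of `w : ℝⁿ × ℝ → ℝ` in the direction `d`. -/
noncomputable def secondDirDeriv (n : ℕ)
    (w : EuclideanSpace ℝ (Fin n) × ℝ → ℝ) (p d : EuclideanSpace ℝ (Fin n) × ℝ) : ℝ :=
  fderiv ℝ (fun q => fderiv ℝ w q d) p d

/-- Laplacian of `w : ℝⁿ × ℝ → ℝ` (coordinates `(x, λ)`). -/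
noncomputable def cylLaplacian (n : ℕ)
    (w : EuclideanSpace ℝ (Fin n) × ℝ → ℝ) (p : EuclideanSpace ℝ (Fin n) × ℝ) : ℝ :=
  (∑ i : Fin n, secondDirDeriv n w p (EuclideanSpace.single i 1, 0)) +
    secondDirDeriv n w p (0, 1)

open Filter Topology Set

theorem IsLocalMax.deriv_deriv_nonpos {f : ℝ → ℝ} {x₀ : ℝ} (h : IsLocalMax f x₀)
    (hc : ContinuousAt f x₀) : deriv (deriv f) x₀ ≤ 0 := by
  by_contra! hpos
  have hmin := isLocalMin_of_deriv_deriv_pos hpos h.deriv_eq_zero hc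
  have hconst : f =ᶠ[𝓝 x₀] fun _ => f x₀ :=
    (hmin.and h).mono fun x hx => le_antisymm hx.2 hx.1
  have hderiv : deriv f =ᶠ[𝓝 x₀] fun _ => 0 :=
    hconst.eventuallyEq_nhds.mono fun x hx => by rw [hx.deriv_eq, deriv_const]
  rw [hderiv.deriv_eq, deriv_const] at hpos
  exact hpos.false

section ContDiffTwo

variable {𝕜 E F : Type*} [NontriviallyNormedField 𝕜] [NormedAddCommGroup E] [NormedSpace 𝕜 E]
  [NormedAddCommGroup F] [NormedSpace 𝕜 F] {f : E → F} {p : E}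

theorem ContDiffAt.eventually_differentiableAt (hf : ContDiffAt 𝕜 2 f p) :
    ∀ᶠ q in 𝓝 p, DifferentiableAt 𝕜 f q :=
  (hf.eventually (by simp)).mono fun _ hq => hq.differentiableAt (by norm_num)

theorem ContDiffAt.differentiableAt_fderiv_apply (hf : ContDiffAt 𝕜 2 f p) (d : E) :
    DifferentiableAt 𝕜 (fun q => fderiv 𝕜 f q d) p :=
  ((hf.fderiv_right (m := 1) (by norm_num)).differentiableAt (by norm_num)).clm_apply
    (differentiableAt_const d)

end ContDiffTwo

section CylinderCalculus

variable {n : ℕ} {f g : EuclideanSpace ℝ (Fin n) × ℝ → ℝ} {p : EuclideanSpace ℝ (Fin n) × ℝ}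

theorem secondDirDeriv_nonpos_of_isLocalMax (hf : ContDiffAt ℝ 2 f p) (hmax : IsLocalMax f p)
    (d : EuclideanSpace ℝ (Fin n) × ℝ) : secondDirDeriv n f p d ≤ 0 := by
  set line : ℝ → EuclideanSpace ℝ (Fin n) × ℝ := fun t => p + t • d
  have hline : ∀ t, HasDerivAt line d t := fun t =>
    (((hasDerivAt_id t).smul_const d).const_add p).congr_deriv (one_smul ℝ d)
  have hline0 : line 0 = p := by simp [line]
  have hcont : Continuous line := by fun_prop
  have hderiv : deriv (f ∘ line) =ᶠ[𝓝 0] fun t => fderiv ℝ f (line t) d := by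
    have := hcont.continuousAt.preimage_mem_nhds (hline0 ▸ hf.eventually_differentiableAt)
    filter_upwards [this] with t ht
    exact (ht.hasFDerivAt.comp_hasDerivAt t (hline t)).deriv
  have hsecond : HasDerivAt (fun t => fderiv ℝ f (line t) d) (secondDirDeriv n f p d) 0 := by
    have h := (hline0 ▸ hf.differentiableAt_fderiv_apply d).hasFDerivAt.comp_hasDerivAt 0
      (hline 0)
    rwa [hline0] at h
  rw [← hsecond.deriv, ← hderiv.deriv_eq]
  exact (hline0 ▸ hmax).comp_continuous hcont.continuousAt |>.deriv_deriv_nonpos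
    (hf.continuousAt.comp_of_eq hcont.continuousAt hline0)

theorem cylLaplacian_nonpos_of_isLocalMax (hf : ContDiffAt ℝ 2 f p) (hmax : IsLocalMax f p) :
    cylLaplacian n f p ≤ 0 :=
  add_nonpos (Finset.sum_nonpos fun _ _ => secondDirDeriv_nonpos_of_isLocalMax hf hmax _)
    (secondDirDeriv_nonpos_of_isLocalMax hf hmax _)

theorem secondDirDeriv_add (hf : ContDiffAt ℝ 2 f p) (hg : ContDiffAt ℝ 2 g p)
    (d : EuclideanSpace ℝ (Fin n) × ℝ) :
    secondDirDeriv n (fun q => f q + g q) p d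
      = secondDirDeriv n f p d + secondDirDeriv n g p d := by
  have hfirst : (fun q => fderiv ℝ (fun q => f q + g q) q d)
      =ᶠ[𝓝 p] fun q => fderiv ℝ f q d + fderiv ℝ g q d := by
    filter_upwards [hf.eventually_differentiableAt, hg.eventually_differentiableAt]
      with q hfq hgq
    rw [fderiv_fun_add hfq hgq, add_apply]
  rw [secondDirDeriv, hfirst.fderiv_eq, fderiv_fun_add (hf.differentiableAt_fderiv_apply d)
    (hg.differentiableAt_fderiv_apply d)]
  rfl

theorem cylLaplacian_add (hf : ContDiffAt ℝ 2 f p) (hg : ContDiffAt ℝ 2 g p) :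
    cylLaplacian n (fun q => f q + g q) p = cylLaplacian n f p + cylLaplacian n g p := by
  simp only [cylLaplacian, secondDirDeriv_add hf hg, Finset.sum_add_distrib]
  ring

theorem secondDirDeriv_comp_snd {φ φ' : ℝ → ℝ} {φ'' : ℝ} (hφ : ∀ t, HasDerivAt φ (φ' t) t)
    (hφ' : HasDerivAt φ' φ'' p.2) (d : EuclideanSpace ℝ (Fin n) × ℝ) :
    secondDirDeriv n (fun q => φ q.2) p d = φ'' * d.2 * d.2 := by
  have hfirst : ∀ q : EuclideanSpace ℝ (Fin n) × ℝ,
      fderiv ℝ (fun q => φ q.2) q = φ' q.2 • ContinuousLinearMap.snd ℝ _ ℝ :=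
    fun q => ((hφ q.2).comp_hasFDerivAt q hasFDerivAt_snd).fderiv
  have hsecond : HasFDerivAt (fun q : EuclideanSpace ℝ (Fin n) × ℝ => φ' q.2 * d.2)
      (d.2 • φ'' • ContinuousLinearMap.snd ℝ _ ℝ) p :=
    (hφ'.comp_hasFDerivAt p hasFDerivAt_snd).mul_const d.2
  simp only [secondDirDeriv, hfirst, smul_apply,
    ContinuousLinearMap.coe_snd', smul_eq_mul, hsecond.fderiv]
  ring

theorem cylLaplacian_comp_snd {φ φ' : ℝ → ℝ} {φ'' : ℝ} (hφ : ∀ t, HasDerivAt φ (φ' t) t)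
    (hφ' : HasDerivAt φ' φ'' p.2) : cylLaplacian n (fun q => φ q.2) p = φ'' := by
  simp [cylLaplacian, secondDirDeriv_comp_snd hφ hφ']

end CylinderCalculus

theorem exists_isLocalMaxOn_ge {E : Type*} [PseudoMetricSpace E] [ProperSpace E] {B : Set E}
    (hB : Bornology.IsBounded B) {C : Set (E × ℝ)} (hC : IsClosed C) (hCB : C ⊆ B ×ˢ Ici 0)
    {v : E × ℝ → ℝ} (hv : ContinuousOn v C) {M ε : ℝ} (hε : 0 < ε)
    (hvM : ∀ q ∈ C, v q ≤ M - ε * q.2) {p : E × ℝ} (hp : p ∈ C) :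
    ∃ m ∈ C, v p ≤ v m ∧ IsLocalMaxOn v C m := by
  obtain ⟨L, hpL, hL⟩ : ∃ L, p.2 < L ∧ ∀ q ∈ C, L ≤ q.2 → v q < v p := by
    refine ⟨max (p.2 + 1) ((M - v p) / ε + 1), by simp, fun q hq hLq => ?_⟩
    have hgap : M - v p < ε * q.2 := by
      rw [mul_comm, ← div_lt_iff₀ hε]
      linarith [(le_max_right _ _).trans hLq]
    linarith [hvM q hq]
  set K := C ∩ {q | q.2 ≤ L}
  have hK : IsCompact K := by
    refine Metric.isCompact_of_isClosed_isBounded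
      (hC.inter (isClosed_le continuous_snd continuous_const)) ?_
    exact (hB.prod (Metric.isBounded_Icc 0 L)).subset
      fun q hq => ⟨(hCB hq.1).1, (hCB hq.1).2, hq.2⟩
  have hpK : p ∈ K := ⟨hp, hpL.le⟩
  obtain ⟨m, hmK, hm⟩ := hK.exists_isMaxOn ⟨p, hpK⟩ (hv.mono inter_subset_left)
  have hmL : m.2 < L := lt_of_not_ge fun h => (hL m hmK.1 h).not_ge (hm hpK)
  refine ⟨m, hmK.1, hm hpK, ?_⟩
  filter_upwards [inter_mem_nhdsWithin C
    ((isOpen_lt continuous_snd continuous_const).mem_nhds hmL)] with q hq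
  exact hm ⟨hq.1, le_of_lt (show q.2 < L from hq.2)⟩

noncomputable def expBarrier (ε t : ℝ) : ℝ := ε * (Real.exp (-t) - t)

section ExpBarrier

variable {ε : ℝ}

theorem contDiff_expBarrier (k : WithTop ℕ∞) : ContDiff ℝ k (expBarrier ε) := by
  unfold expBarrier
  fun_prop

theorem hasDerivAt_expBarrier (t : ℝ) :
    HasDerivAt (expBarrier ε) (ε * (-Real.exp (-t) - 1)) t :=
  (((hasDerivAt_neg' t).exp.sub (hasDerivAt_id' t)).const_mul ε).congr_deriv (by ring)

theorem hasDerivAt_deriv_expBarrier (t : ℝ) :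
    HasDerivAt (fun s => ε * (-Real.exp (-s) - 1)) (ε * Real.exp (-t)) t :=
  (((hasDerivAt_neg' t).exp.neg.sub_const 1).const_mul ε).congr_deriv (by ring)

theorem expBarrier_zero : expBarrier ε 0 = ε := by
  simp [expBarrier]

theorem expBarrier_le (hε : 0 ≤ ε) {t : ℝ} (ht : 0 ≤ t) : expBarrier ε t ≤ ε * (1 - t) :=
  mul_le_mul_of_nonneg_left (by linarith [Real.exp_le_one_iff.mpr (neg_nonpos.mpr ht)]) hε

theorem neg_expBarrier_le (hε : 0 ≤ ε) (t : ℝ) : -expBarrier ε t ≤ ε * t := by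
  have := mul_nonneg hε (Real.exp_pos (-t)).le
  rw [expBarrier]
  linarith

theorem cylLaplacian_add_expBarrier {n : ℕ} {w : EuclideanSpace ℝ (Fin n) × ℝ → ℝ}
    {p : EuclideanSpace ℝ (Fin n) × ℝ} (hw : ContDiffAt ℝ 2 w p) :
    cylLaplacian n (fun q => w q + expBarrier ε q.2) p
      = cylLaplacian n w p + ε * Real.exp (-p.2) := by
  rw [cylLaplacian_add (g := fun q => expBarrier ε q.2) hw
      ((contDiff_expBarrier 2).comp contDiff_snd).contDiffAt,
    cylLaplacian_comp_snd hasDerivAt_expBarrier (hasDerivAt_deriv_expBarrier _)]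

end ExpBarrier

section HalfCylinder

variable {n : ℕ} {T : Set (EuclideanSpace ℝ (Fin n))} {w : EuclideanSpace ℝ (Fin n) × ℝ → ℝ}
  {a ε : ℝ}

theorem not_isLocalMax_add_expBarrier (hε : 0 < ε) {p : EuclideanSpace ℝ (Fin n) × ℝ}
    (hw : ContDiffAt ℝ 2 w p) (hharm : cylLaplacian n w p = 0) :
    ¬IsLocalMax (fun q => w q + expBarrier ε q.2) p := fun hmax => by
  have hv : ContDiffAt ℝ 2 (fun q => w q + expBarrier ε q.2) p :=
    hw.add ((contDiff_expBarrier 2).comp contDiff_snd).contDiffAt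
  have hpos : 0 < cylLaplacian n (fun q => w q + expBarrier ε q.2) p := by
    rw [cylLaplacian_add_expBarrier hw, hharm, zero_add]
    positivity
  exact (cylLaplacian_nonpos_of_isLocalMax hv hmax).not_gt hpos

theorem fderiv_vertical_le_of_isLocalMaxOn_add_expBarrier (hε : 0 ≤ ε)
    {x : EuclideanSpace ℝ (Fin n)} (hx : x ∈ closure T)
    (hmax : IsLocalMaxOn (fun q => w q + expBarrier ε q.2) (closure T ×ˢ Ici 0) (x, 0)) :
    fderiv ℝ w (x, 0) (0, 1) ≤ 2 * ε := by
  by_cases hdiff : DifferentiableAt ℝ w (x, 0)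
  · have hv := hdiff.hasFDerivAt.add
      ((hasDerivAt_expBarrier (ε := ε) 0).comp_hasFDerivAt (x, (0 : ℝ)) hasFDerivAt_snd)
    have hup : ((0 : EuclideanSpace ℝ (Fin n)), (1 : ℝ)) ∈
        posTangentConeAt (closure T ×ˢ Ici 0) (x, 0) :=
      mem_posTangentConeAt_of_frequently_mem <| Eventually.frequently <|
        eventually_mem_nhdsWithin.mono fun t (ht : 0 < t) => by simpa using ⟨hx, ht.le⟩
    have := hmax.hasFDerivWithinAt_nonpos hv.hasFDerivWithinAt hup
    simp only [neg_zero, Real.exp_zero, add_apply, smul_apply, ContinuousLinearMap.coe_snd',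
      smul_eq_mul, mul_one] at this
    linarith
  · -- junk value: `fderiv` is `0` where `w` is not differentiable
    rw [fderiv_zero_of_not_differentiableAt hdiff, zero_apply]
    positivity

theorem add_expBarrier_le_of_isLocalMaxOn (ha : 0 < a) (hε : 0 < ε) (hTopen : IsOpen T)
    (hwC2 : ContDiffOn ℝ 2 w (T ×ˢ Ioi 0)) (hharm : ∀ p ∈ T ×ˢ Ioi 0, cylLaplacian n w p = 0)
    (hlat : ∀ x ∈ frontier T, ∀ l : ℝ, 0 ≤ l → w (x, l) ≤ 0)
    (hneu : ∀ x ∈ T, -(fderiv ℝ w (x, (0 : ℝ)) (0, 1)) + a * w (x, 0) ≤ 0)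
    {m : EuclideanSpace ℝ (Fin n) × ℝ} (hm : m ∈ closure T ×ˢ Ici 0)
    (hmax : IsLocalMaxOn (fun q => w q + expBarrier ε q.2) (closure T ×ˢ Ici 0) m) :
    w m + expBarrier ε m.2 ≤ ε * (2 / a + 1) := by
  obtain ⟨x, l⟩ := m
  obtain ⟨hx, hl : 0 ≤ l⟩ := hm
  by_cases hxT : x ∈ T
  · rcases hl.eq_or_lt with rfl | hl
    · have hD := fderiv_vertical_le_of_isLocalMaxOn_add_expBarrier hε.le hx hmax
      have hw : w (x, 0) ≤ 2 * ε / a := by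
        rw [le_div_iff₀' ha]
        linarith [hneu x hxT]
      rw [expBarrier_zero]
      calc w (x, 0) + ε ≤ 2 * ε / a + ε := by linarith
        _ = ε * (2 / a + 1) := by ring
    · have hΩ : T ×ˢ Ioi 0 ∈ 𝓝 (x, l) := (hTopen.prod isOpen_Ioi).mem_nhds ⟨hxT, hl⟩
      refine absurd (hmax.isLocalMax ?_) (not_isLocalMax_add_expBarrier hε
        (hwC2.contDiffAt hΩ) (hharm _ ⟨hxT, hl⟩))
      exact mem_of_superset hΩ (prod_mono subset_closure Ioi_subset_Ici_self)
  · have hw := hlat x (hTopen.frontier_eq ▸ ⟨hx, hxT⟩) l hl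
    have hb := expBarrier_le hε.le hl
    have : 0 ≤ ε * l := mul_nonneg hε.le hl
    have : 0 ≤ ε * (2 / a) := by positivity
    linarith

end HalfCylinder

theorem stmt_17_general (n : ℕ) (a : ℝ) (ha : 0 < a)
    (T : Set (EuclideanSpace ℝ (Fin n)))
    (hTopen : IsOpen T) (hTbdd : Bornology.IsBounded T)
    (Ω : Set (EuclideanSpace ℝ (Fin n) × ℝ))
    (hΩ : Ω = {p | p.1 ∈ T ∧ 0 < p.2})
    (w : EuclideanSpace ℝ (Fin n) × ℝ → ℝ)
    (hwC2 : ContDiffOn ℝ 2 w Ω)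
    (hwcont : ContinuousOn w (closure Ω))
    (hwbdd : ∃ M : ℝ, ∀ p, |w p| ≤ M)
    (hharm : ∀ p ∈ Ω, cylLaplacian n w p = 0)
    (hlat : ∀ x ∈ frontier T, ∀ l : ℝ, 0 ≤ l → w (x, l) ≤ 0)
    (hneu : ∀ x ∈ T, -(fderiv ℝ w (x, (0 : ℝ)) (0, 1)) + a * w (x, 0) ≤ 0) :
    ∀ p ∈ Ω, w p ≤ 0 := by
  obtain rfl : Ω = T ×ˢ Ioi 0 := hΩ
  rw [closure_prod_eq, closure_Ioi] at hwcont
  obtain ⟨M, hM⟩ := hwbdd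
  intro p hp
  have hbound : ∀ ε > 0, w p ≤ ε * (2 / a + 1 + p.2) := fun ε hε => by
    have hdecay : ∀ q ∈ closure T ×ˢ Ici 0, w q + expBarrier ε q.2 ≤ (M + ε) - ε * q.2 :=
      fun q hq => by linarith [(abs_le.mp (hM q)).2, expBarrier_le hε.le hq.2]
    obtain ⟨m, hm, hpm, hmax⟩ := exists_isLocalMaxOn_ge (v := fun q => w q + expBarrier ε q.2)
      hTbdd.closure (isClosed_closure.prod isClosed_Ici) Subset.rfl
      (hwcont.add ((contDiff_expBarrier 0).continuous.comp continuous_snd).continuousOn) hε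
      hdecay (prod_mono subset_closure Ioi_subset_Ici_self hp)
    linarith [add_expBarrier_le_of_isLocalMaxOn ha hε hTopen hwC2 hharm hlat hneu hm hmax,
      neg_expBarrier_le hε.le p.2]
  refine le_of_forall_pos_le_add fun δ hδ => ?_
  have hc : 0 < 2 / a + 1 + p.2 := by have : 0 < p.2 := hp.2; positivity
  simpa [div_mul_cancel₀ _ hc.ne'] using hbound (δ / (2 / a + 1 + p.2)) (by positivity)

/-- Comparison/maximum principle in the half-cylinder `Ω = T × (0,∞)`: if `w` is
bounded, harmonic in `Ω`, `w ≤ 0` on the lateral boundary `∂T × [0,∞)`, and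
`-∂_λ w + a w ≤ 0` on `T × {0}` with `a > 0`, then `w ≤ 0` in `Ω`. -/
theorem stmt_17 (n : ℕ) (a : ℝ) (ha : 0 < a) (g : ℝ → ℝ) (hg : Monotone g)
    (T : Set (EuclideanSpace ℝ (Fin n)))
    (hTopen : IsOpen T) (hTne : T.Nonempty) (hTbdd : Bornology.IsBounded T)
    (Ω : Set (EuclideanSpace ℝ (Fin n) × ℝ))
    (hΩ : Ω = {p | p.1 ∈ T ∧ 0 < p.2})
    (w : EuclideanSpace ℝ (Fin n) × ℝ → ℝ)
    (hwC2 : ContDiffOn ℝ 2 w Ω)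
    (hwcont : ContinuousOn w (closure Ω))
    (hwbdd : ∃ M : ℝ, ∀ p, |w p| ≤ M)
    (hharm : ∀ p ∈ Ω, cylLaplacian n w p = 0)
    (hlat : ∀ x ∈ frontier T, ∀ l : ℝ, 0 ≤ l → w (x, l) ≤ 0)
    (hneu : ∀ x ∈ T, -(fderiv ℝ w (x, (0 : ℝ)) (0, 1)) + a * w (x, 0) ≤ 0) :
    ∀ p ∈ Ω, w p ≤ 0 :=
  stmt_17_general n a ha T hTopen hTbdd Ω hΩ w hwC2 hwcont hwbdd hharm hlat hneu
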